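/- arXiv:0805.3912 — 4 statements merged into one kernel-verified Lean document; each statement's English description precedes it below -/
import Mathlib

section
/- For nonempty closed bounded convex subsets A, B of a Banach space E, the Hausdorff distance between A and B equals the supremum over x* in the closed unit ball of the dual space of |s(x*, A) − s(x*, B)|, where s(x*, C) = sup_{c ∈ C} x*(c) is the support function. -/
/-!
Each `f` in the dual unit ball is 1-Lipschitz, so the support functions of `A` and `B` at `f`
differ by at most the Hausdorff distance. Conversely, separating a point `x` from the open
`d`-thickening of a convex set `B`, where `d = infDist x B`, yields a functional `g` of norm one
with `g x ≥ s(g, B) + d`; for `x ∈ A` this bounds `infDist x B` by `s(g, A) - s(g, B)`.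
-/

open Metric

section

variable {E : Type*} [NormedAddCommGroup E] [NormedSpace ℝ E]

theorem mul_norm_le_of_forall_norm_lt_apply_lt (f : StrongDual ℝ E) {r c : ℝ} (hr : 0 < r)
    (h : ∀ u : E, ‖u‖ < r → f u < c) : r * ‖f‖ ≤ c := by
  by_contra! hc
  obtain ⟨u, hu, hfu⟩ := f.exists_lt_apply_of_lt_opNorm ((div_lt_iff₀' hr).2 hc)
  have hru : ‖r • u‖ < r := by
    rw [norm_smul, Real.norm_of_nonneg hr.le]
    exact mul_lt_of_lt_one_right hr hu
  have hc' : c < r * |f u| := (div_lt_iff₀' hr).1 hfu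
  rcases abs_choice (f u) with hfu' | hfu' <;> rw [hfu'] at hc'
  · have := h _ hru
    rw [map_smul, smul_eq_mul] at this
    linarith
  · have := h _ (by rwa [norm_neg])
    rw [map_neg, map_smul, smul_eq_mul] at this
    linarith

theorem sub_sSup_image_le_infDist {f : StrongDual ℝ E} (hf : ‖f‖ ≤ 1) {B : Set E}
    (hB : B.Nonempty) (hBf : BddAbove (f '' B)) (x : E) :
    f x - sSup (f '' B) ≤ infDist x B := by
  refine (le_infDist (x := x) hB).2 fun b hb => ?_
  have hfb : f b ≤ sSup (f '' B) := le_csSup hBf (Set.mem_image_of_mem f hb)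
  calc f x - sSup (f '' B) ≤ f (x - b) := by rw [map_sub]; linarith
    _ ≤ ‖f‖ * ‖x - b‖ := (le_abs_self _).trans (f.le_opNorm _)
    _ ≤ dist x b := by
      rw [dist_eq_norm]; exact mul_le_of_le_one_left (norm_nonneg _) hf

theorem Convex.exists_norm_le_one_infDist_le_sub_sSup_image {B : Set E} (hB : Convex ℝ B)
    (hBne : B.Nonempty) (x : E) :
    ∃ g : StrongDual ℝ E, ‖g‖ ≤ 1 ∧ infDist x B ≤ g x - sSup (g '' B) := by
  rcases (infDist_nonneg (x := x) (s := B)).eq_or_lt with hd | hd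
  · exact ⟨0, by simp, by simp [← hd, hBne.image_const]⟩
  have hx : x ∉ Metric.thickening (infDist x B) B := by
    rw [mem_thickening_iff_infDist_lt hBne]; exact lt_irrefl _
  obtain ⟨f, hf⟩ := geometric_hahn_banach_open_point (hB.thickening _) isOpen_thickening hx
  have hsep : ∀ b ∈ B, infDist x B * ‖f‖ ≤ f x - f b := fun b hb =>
    mul_norm_le_of_forall_norm_lt_apply_lt f hd fun u hu => by
      have := hf (b + u) (ball_subset_thickening hb _ (by simpa [dist_eq_norm] using hu))
      rw [map_add] at this
      linarith
  obtain ⟨b, hb⟩ := hBne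
  have hf0 : 0 < ‖f‖ := norm_pos_iff.2 fun h0 => by
    simpa [h0] using hf b (self_subset_thickening hd B hb)
  refine ⟨‖f‖⁻¹ • f, by rw [norm_smul, norm_inv, norm_norm, inv_mul_cancel₀ hf0.ne'], ?_⟩
  suffices sSup ((‖f‖⁻¹ • f) '' B) ≤ (‖f‖⁻¹ • f) x - infDist x B by linarith
  refine csSup_le ⟨_, Set.mem_image_of_mem _ hb⟩ (Set.forall_mem_image.2 fun b' hb' => ?_)
  have := (le_inv_mul_iff₀ hf0).2 ((mul_comm _ _).trans_le (hsep b' hb'))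
  simp only [smul_apply, smul_eq_mul]
  linarith [mul_sub (‖f‖⁻¹) (f x) (f b')]

variable {A B : Set E}

theorem sSup_image_le_sSup_image_add_hausdorffDist {f : StrongDual ℝ E} (hf : ‖f‖ ≤ 1)
    (hA : A.Nonempty) (hB : B.Nonempty) (hAb : Bornology.IsBounded A)
    (hBb : Bornology.IsBounded B) :
    sSup (f '' A) ≤ sSup (f '' B) + hausdorffDist A B := by
  refine csSup_le (hA.image f) (Set.forall_mem_image.2 fun a ha => ?_)
  have := sub_sSup_image_le_infDist hf hB (f.lipschitz.isBounded_image hBb).bddAbove a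
  have := infDist_le_hausdorffDist_of_mem ha
    (hausdorffEDist_ne_top_of_nonempty_of_bounded hA hB hAb hBb)
  linarith

theorem abs_sSup_image_sub_sSup_image_le_hausdorffDist {f : StrongDual ℝ E} (hf : ‖f‖ ≤ 1)
    (hA : A.Nonempty) (hB : B.Nonempty) (hAb : Bornology.IsBounded A)
    (hBb : Bornology.IsBounded B) :
    |sSup (f '' A) - sSup (f '' B)| ≤ hausdorffDist A B := by
  have hAB := sSup_image_le_sSup_image_add_hausdorffDist hf hA hB hAb hBb
  have hBA := sSup_image_le_sSup_image_add_hausdorffDist hf hB hA hBb hAb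
  rw [hausdorffDist_comm] at hBA
  exact abs_sub_le_iff.2 ⟨by linarith, by linarith⟩

theorem exists_norm_le_one_infDist_le_sSup_image_sub_sSup_image (hAb : Bornology.IsBounded A)
    (hB : Convex ℝ B) (hBne : B.Nonempty) {x : E} (hx : x ∈ A) :
    ∃ g : StrongDual ℝ E, ‖g‖ ≤ 1 ∧ infDist x B ≤ sSup (g '' A) - sSup (g '' B) := by
  obtain ⟨g, hg, hxg⟩ := hB.exists_norm_le_one_infDist_le_sub_sSup_image hBne x
  have := le_csSup (g.lipschitz.isBounded_image hAb).bddAbove (Set.mem_image_of_mem g hx)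
  exact ⟨g, hg, by linarith⟩

end

theorem hausdorffDist_eq_sup_support_function_general
    {E : Type*} [NormedAddCommGroup E] [NormedSpace ℝ E]
    (A B : Set E)
    (hAne : A.Nonempty) (hAb : Bornology.IsBounded A) (hAco : Convex ℝ A)
    (hBne : B.Nonempty) (hBb : Bornology.IsBounded B) (hBco : Convex ℝ B) :
    Metric.hausdorffDist A B =
      sSup ((fun f : StrongDual ℝ E => |sSup (f '' A) - sSup (f '' B)|) ''
        Metric.closedBall (0 : StrongDual ℝ E) 1) := by
  have hle : ∀ f ∈ closedBall (0 : StrongDual ℝ E) 1,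
      |sSup (f '' A) - sSup (f '' B)| ≤ hausdorffDist A B := fun f hf =>
    abs_sSup_image_sub_sSup_image_le_hausdorffDist (mem_closedBall_zero_iff.1 hf) hAne hBne hAb hBb
  have hsup : ∀ g : StrongDual ℝ E, ‖g‖ ≤ 1 → |sSup (g '' A) - sSup (g '' B)| ≤
      sSup ((fun f : StrongDual ℝ E => |sSup (f '' A) - sSup (f '' B)|) '' closedBall 0 1) :=
    fun g hg => le_csSup ⟨_, Set.forall_mem_image.2 hle⟩
      (Set.mem_image_of_mem _ (mem_closedBall_zero_iff.2 hg))
  refine le_antisymm (hausdorffDist_le_of_infDist ((abs_nonneg _).trans (hsup 0 (by simp)))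
    (fun x hx => ?_) (fun x hx => ?_))
    (csSup_le ((nonempty_closedBall.2 zero_le_one).image _) (Set.forall_mem_image.2 hle))
  · obtain ⟨g, hg, hxg⟩ := exists_norm_le_one_infDist_le_sSup_image_sub_sSup_image hAb hBco hBne hx
    exact hxg.trans ((le_abs_self _).trans (hsup g hg))
  · obtain ⟨g, hg, hxg⟩ := exists_norm_le_one_infDist_le_sSup_image_sub_sSup_image hBb hAco hAne hx
    exact hxg.trans ((le_abs_self _).trans ((abs_sub_comm _ _).trans_le (hsup g hg)))

/-- For nonempty closed bounded convex sets, the Hausdorff distance equals the supremum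
over the dual unit ball of the absolute difference of support functions. -/
theorem hausdorffDist_eq_sup_support_function
    {E : Type*} [NormedAddCommGroup E] [NormedSpace ℝ E] [CompleteSpace E]
    (A B : Set E)
    (hAne : A.Nonempty) (hAcl : IsClosed A) (hAb : Bornology.IsBounded A) (hAco : Convex ℝ A)
    (hBne : B.Nonempty) (hBcl : IsClosed B) (hBb : Bornology.IsBounded B) (hBco : Convex ℝ B) :
    Metric.hausdorffDist A B =
      sSup ((fun f : StrongDual ℝ E => |sSup (f '' A) - sSup (f '' B)|) ''
        Metric.closedBall (0 : StrongDual ℝ E) 1) :=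
  hausdorffDist_eq_sup_support_function_general A B hAne hAb hAco hBne hBb hBco
end

section
/- Support function commutes with the Aumann integral: let G : [a,b] → (nonempty closed convex bounded subsets of a separable reflexive Banach space E) be measurable and integrably bounded. Then for every x* in the dual of E, s(x*, ∫_a^b G(τ) dτ) = ∫_a^b s(x*, G(τ)) dτ. -/
/-!
For an integrable selection `f` of `G`, `x (∫ f) = ∫ x ∘ f ≤ ∫ s(x, G)`. Conversely, the map
`τ ↦ s(x, G τ)` is measurable, being a supremum over a weakly measurable map, and so the map
`τ ↦ {y ∈ G τ | s(x, G τ) - ε < x y}` is weakly measurable too. The Kuratowski–Ryll-Nardzewski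
theorem gives a measurable selection of its closure, which lies in the closed set `G τ`, and the
integrable bound makes it integrable; its integral is within `ε (b - a)` of `∫ s(x, G)`.
-/

open MeasureTheory Pointwise

/-- The Aumann integral of a set-valued map `X` over a set `s ⊆ ℝ` (w.r.t. Lebesgue measure). -/
noncomputable def aumannIntegral {E : Type*} [NormedAddCommGroup E] [NormedSpace ℝ E]
    (X : ℝ → Set E) (s : Set ℝ) : Set E :=
  {y | ∃ f : ℝ → E, IntegrableOn f s volume ∧
        (∀ᵐ τ ∂(volume.restrict s), f τ ∈ X τ) ∧ y = ∫ τ in s, f τ}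

open Set Filter Metric TopologicalSpace Topology

theorem mem_closure_of_tendsto_of_inter_ball_nonempty {E : Type*} [PseudoMetricSpace E]
    {S : Set E} {u : ℕ → E} {a : E}
    (hu : Tendsto u atTop (𝓝 a)) {r : ℕ → ℝ} (hr : Tendsto r atTop (𝓝 0))
    (hS : ∀ k, (S ∩ ball (u k) (r k)).Nonempty) : a ∈ closure S := by
  choose y hyS hyu using hS
  have hy : Tendsto y atTop (𝓝 a) := by
    refine tendsto_iff_dist_tendsto_zero.2 (squeeze_zero (fun _ => dist_nonneg)
      (fun k => (dist_triangle (y k) (u k) a).trans (add_le_add_left (hyu k).le _)) ?_)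
    simpa using hr.add (tendsto_iff_dist_tendsto_zero.1 hu)
  exact mem_closure_of_tendsto hy (Eventually.of_forall hyS)

section WeaklyMeasurable

variable {α E : Type*} [MeasurableSpace α]

def IsWeaklyMeasurable [TopologicalSpace E] (F : α → Set E) : Prop :=
  ∀ O : Set E, IsOpen O → MeasurableSet {t | (F t ∩ O).Nonempty}

theorem isWeaklyMeasurable_ite [TopologicalSpace E] {F : α → Set E} {s : Set α}
    [DecidablePred (· ∈ s)] (hs : MeasurableSet s)
    (hF : ∀ O : Set E, IsOpen O → MeasurableSet {t | t ∈ s ∧ (F t ∩ O).Nonempty}) (C : Set E) :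
    IsWeaklyMeasurable fun t => if t ∈ s then F t else C := by
  intro O hO
  have hset : {t | ((if t ∈ s then F t else C) ∩ O).Nonempty} =
      {t | t ∈ s ∧ (F t ∩ O).Nonempty} ∪ (sᶜ ∩ {_t | (C ∩ O).Nonempty}) := by
    ext t
    by_cases ht : t ∈ s <;> simp [ht]
  rw [hset]
  exact (hF O hO).union (hs.compl.inter (MeasurableSet.const _))

namespace IsWeaklyMeasurable

theorem inter_comp [TopologicalSpace E] {F : α → Set E} (hF : IsWeaklyMeasurable F)
    {ι : Type*} [Countable ι] [MeasurableSpace ι] [MeasurableSingletonClass ι]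
    {U : ι → Set E} (hU : ∀ i, IsOpen (U i)) {n : α → ι} (hn : Measurable n) :
    IsWeaklyMeasurable fun t => F t ∩ U (n t) := by
  intro O hO
  have hset : {t | (F t ∩ U (n t) ∩ O).Nonempty} =
      ⋃ i, n ⁻¹' {i} ∩ {t | (F t ∩ (U i ∩ O)).Nonempty} := by
    ext t
    simp [inter_assoc]
  rw [hset]
  exact .iUnion fun i => (hn (measurableSet_singleton i)).inter (hF _ ((hU i).inter hO))

theorem inter_lt [TopologicalSpace E] {F : α → Set E} (hF : IsWeaklyMeasurable F)
    {φ : E → ℝ} (hφ : Continuous φ) {g : α → ℝ} (hg : Measurable g) :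
    IsWeaklyMeasurable fun t => F t ∩ {y | g t < φ y} := by
  intro O hO
  have hset : {t | (F t ∩ {y | g t < φ y} ∩ O).Nonempty} =
      ⋃ q : ℚ, {t | g t < q} ∩ {t | (F t ∩ (O ∩ φ ⁻¹' Ioi (q : ℝ))).Nonempty} := by
    ext t
    simp only [mem_ofPred_eq, mem_iUnion, mem_inter_iff]
    constructor
    · rintro ⟨y, ⟨hyF, hy⟩, hyO⟩
      obtain ⟨q, hgq, hqy⟩ := exists_rat_btwn (show g t < φ y from hy)
      exact ⟨q, hgq, y, hyF, hyO, hqy⟩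
    · rintro ⟨q, hgq, y, hyF, hyO, hqy⟩
      exact ⟨y, ⟨hyF, hgq.trans hqy⟩, hyO⟩
  rw [hset]
  exact .iUnion fun q => (measurableSet_lt hg measurable_const).inter
    (hF _ (hO.inter (isOpen_Ioi.preimage hφ)))

theorem measurable_sSup_image [TopologicalSpace E] {F : α → Set E} (hF : IsWeaklyMeasurable F)
    {φ : E → ℝ} (hφ : Continuous φ) (hne : ∀ t, (F t).Nonempty)
    (hbdd : ∀ t, BddAbove (φ '' F t)) :
    Measurable fun t => sSup (φ '' F t) := by
  refine measurable_of_Ioi fun c => ?_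
  have hset : (fun t => sSup (φ '' F t)) ⁻¹' Ioi c = {t | (F t ∩ φ ⁻¹' Ioi c).Nonempty} := by
    ext t
    simp [lt_csSup_iff (hbdd t) ((hne t).image φ), Set.Nonempty, and_comm]
  rw [hset]
  exact hF _ (isOpen_Ioi.preimage hφ)

variable [PseudoMetricSpace E] {F : α → Set E}

theorem exists_measurable_inter_ball_nonempty (hF : IsWeaklyMeasurable F)
    (hne : ∀ t, (F t).Nonempty) {c : ℕ → E} (hc : DenseRange c) {r : ℝ} (hr : 0 < r) :
    ∃ n : α → ℕ, Measurable n ∧ ∀ t, (F t ∩ ball (c (n t)) r).Nonempty := by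
  classical
  have hex : ∀ t, ∃ j, (F t ∩ ball (c j) r).Nonempty := fun t => by
    obtain ⟨y, hy⟩ := hne t
    obtain ⟨j, hj⟩ := hc.exists_dist_lt y hr
    exact ⟨j, y, hy, by rwa [mem_ball]⟩
  exact ⟨fun t => Nat.find (hex t), measurable_find hex fun j => hF _ isOpen_ball,
    fun t => Nat.find_spec (hex t)⟩

theorem exists_seq_measurable_inter_ball_nonempty (hF : IsWeaklyMeasurable F)
    (hne : ∀ t, (F t).Nonempty) {c : ℕ → E} (hc : DenseRange c) :
    ∃ n : ℕ → α → ℕ, (∀ k, Measurable (n k)) ∧ ∀ k t, (F t ∩ ball (c (n k t)) ((1 / 2) ^ k) ∩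
      ball (c (n (k + 1) t)) ((1 / 2) ^ (k + 1))).Nonempty := by
  have step : ∀ (k : ℕ) (m : α → ℕ), Measurable m →
      (∀ t, (F t ∩ ball (c (m t)) ((1 / 2) ^ k)).Nonempty) → ∃ m' : α → ℕ, Measurable m' ∧
        ∀ t, (F t ∩ ball (c (m t)) ((1 / 2) ^ k) ∩ ball (c (m' t)) ((1 / 2) ^ (k + 1))).Nonempty :=
    fun k m hm hmF => (hF.inter_comp (fun _ => isOpen_ball) hm)
      |>.exists_measurable_inter_ball_nonempty hmF hc (by positivity)
  choose! next hnext_meas hnext using step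
  obtain ⟨m₀, hm₀, hm₀F⟩ := hF.exists_measurable_inter_ball_nonempty hne hc one_pos
  let n : ℕ → α → ℕ := fun k => Nat.rec m₀ next k
  have hn : ∀ k, Measurable (n k) ∧ ∀ t, (F t ∩ ball (c (n k t)) ((1 / 2) ^ k)).Nonempty := by
    intro k
    induction k with
    | zero => simpa using ⟨hm₀, hm₀F⟩
    | succ k ih =>
      exact ⟨hnext_meas k _ ih.1 ih.2, fun t =>
        (hnext k _ ih.1 ih.2 t).mono (inter_subset_inter_left _ inter_subset_left)⟩
  exact ⟨n, fun k => (hn k).1, fun k => hnext k _ (hn k).1 (hn k).2⟩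

/-- **Kuratowski–Ryll-Nardzewski selection theorem**. -/
theorem exists_stronglyMeasurable_mem_closure [CompleteSpace E] [SeparableSpace E] [Nonempty E]
    (hF : IsWeaklyMeasurable F) (hne : ∀ t, (F t).Nonempty) :
    ∃ f : α → E, StronglyMeasurable f ∧ ∀ t, f t ∈ closure (F t) := by
  obtain ⟨n, hn_meas, hn⟩ :=
    hF.exists_seq_measurable_inter_ball_nonempty hne (denseRange_denseSeq E)
  set u : α → ℕ → E := fun t k => denseSeq E (n k t)
  have hu_dist : ∀ t k, dist (u t k) (u t (k + 1)) ≤ 2 * (1 / 2) ^ k := fun t k => by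
    obtain ⟨y, ⟨-, hy⟩, hy'⟩ := hn k t
    calc dist (u t k) (u t (k + 1)) ≤ dist y (u t k) + dist y (u t (k + 1)) := dist_triangle_left ..
      _ ≤ (1 / 2) ^ k + (1 / 2) ^ (k + 1) := add_le_add (mem_ball.1 hy).le (mem_ball.1 hy').le
      _ ≤ 2 * (1 / 2) ^ k := by rw [pow_succ]; linarith [pow_pos (half_pos one_pos : (0 : ℝ) < 1 / 2) k]
  have hu_lim : ∀ t, Tendsto (u t) atTop (𝓝 (limUnder atTop (u t))) := fun t =>
    (cauchySeq_of_le_geometric _ _ (by norm_num) (hu_dist t)).tendsto_limUnder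
  have hu_meas : ∀ k, StronglyMeasurable fun t => u t k := fun k =>
    StronglyMeasurable.of_discrete.comp_measurable (hn_meas k)
  refine ⟨fun t => limUnder atTop (u t),
    stronglyMeasurable_of_tendsto atTop hu_meas (tendsto_pi_nhds.2 hu_lim), fun t => ?_⟩
  exact mem_closure_of_tendsto_of_inter_ball_nonempty (hu_lim t)
    (tendsto_pow_atTop_nhds_zero_of_lt_one (by norm_num) (by norm_num))
    fun k => (hn k t).mono inter_subset_left

theorem exists_stronglyMeasurable_sSup_sub_le [CompleteSpace E] [SeparableSpace E] [Nonempty E]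
    (hF : IsWeaklyMeasurable F) (hne : ∀ t, (F t).Nonempty) (hcl : ∀ t, IsClosed (F t))
    {φ : E → ℝ} (hφ : Continuous φ) (hbdd : ∀ t, BddAbove (φ '' F t)) {ε : ℝ} (hε : 0 < ε) :
    ∃ f : α → E, StronglyMeasurable f ∧ ∀ t, f t ∈ F t ∧ sSup (φ '' F t) - ε ≤ φ (f t) := by
  have hσ := (hF.measurable_sSup_image hφ hne hbdd).sub_const ε
  obtain ⟨f, hf, hfF⟩ := (hF.inter_lt hφ hσ).exists_stronglyMeasurable_mem_closure fun t => by
    obtain ⟨_, ⟨y, hy, rfl⟩, hlt⟩ := exists_lt_of_lt_csSup ((hne t).image φ) (sub_lt_self _ hε)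
    exact ⟨y, hy, hlt⟩
  refine ⟨f, hf, fun t => closure_minimal ?_ ((hcl t).inter (isClosed_le continuous_const hφ))
    (hfF t)⟩
  exact inter_subset_inter_right _ (ofPred_subset_ofPred.2 fun _ => le_of_lt)

end IsWeaklyMeasurable

end WeaklyMeasurable

section SupportFunction

variable {α E : Type*} [MeasurableSpace α] [NormedAddCommGroup E] [NormedSpace ℝ E]
  {μ : Measure α} {G : α → Set E}

theorem abs_sSup_image_le (x : StrongDual ℝ E) {S : Set E} (hS : S.Nonempty) {K : ℝ}
    (hK : ∀ y ∈ S, ‖y‖ ≤ K) : |sSup ((fun y => x y) '' S)| ≤ ‖x‖ * K := by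
  have hxK : ∀ y ∈ S, |x y| ≤ ‖x‖ * K := fun y hy =>
    (x.le_opNorm y).trans (mul_le_mul_of_nonneg_left (hK y hy) (norm_nonneg x))
  have hle : ∀ r ∈ (fun y => x y) '' S, r ≤ ‖x‖ * K :=
    forall_mem_image.2 fun y hy => (le_abs_self _).trans (hxK y hy)
  obtain ⟨y₀, hy₀⟩ := hS
  rw [abs_le]
  exact ⟨(neg_le_of_abs_le (hxK y₀ hy₀)).trans (le_csSup ⟨_, hle⟩ (mem_image_of_mem _ hy₀)),
    csSup_le (Set.Nonempty.image _ ⟨y₀, hy₀⟩) hle⟩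

theorem integrable_sSup_image (x : StrongDual ℝ E)
    (hσ : AEStronglyMeasurable (fun t => sSup ((fun y => x y) '' G t)) μ)
    (hne : ∀ᵐ t ∂μ, (G t).Nonempty) {k : α → ℝ} (hk : Integrable k μ)
    (hkG : ∀ᵐ t ∂μ, ∀ y ∈ G t, ‖y‖ ≤ k t) :
    Integrable (fun t => sSup ((fun y => x y) '' G t)) μ :=
  (hk.const_mul ‖x‖).mono' hσ <| by
    filter_upwards [hne, hkG] with t hGt hkt using abs_sSup_image_le x hGt hkt

theorem apply_integral_le_integral_sSup_image [CompleteSpace E] (x : StrongDual ℝ E) {f : α → E}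
    (hf : Integrable f μ) (hfG : ∀ᵐ t ∂μ, f t ∈ G t)
    (hbdd : ∀ᵐ t ∂μ, BddAbove ((fun y => x y) '' G t))
    (hσ : Integrable (fun t => sSup ((fun y => x y) '' G t)) μ) :
    x (∫ t, f t ∂μ) ≤ ∫ t, sSup ((fun y => x y) '' G t) ∂μ := by
  rw [← x.integral_comp_comm hf]
  refine integral_mono_ae (x.integrable_comp hf) hσ ?_
  filter_upwards [hfG, hbdd] with t hft hGt using le_csSup hGt (mem_image_of_mem _ hft)

theorem sSup_image_integral_selections_eq [IsFiniteMeasure μ] [CompleteSpace E]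
    [SeparableSpace E] (x : StrongDual ℝ E) (hG : IsWeaklyMeasurable G)
    (hne : ∀ t, (G t).Nonempty) (hcl : ∀ t, IsClosed (G t))
    (hbdd : ∀ t, BddAbove ((fun y => x y) '' G t)) {k : α → ℝ} (hk : Integrable k μ)
    (hkG : ∀ᵐ t ∂μ, ∀ y ∈ G t, ‖y‖ ≤ k t) :
    sSup ((fun y => x y) ''
        {y | ∃ f : α → E, Integrable f μ ∧ (∀ᵐ t ∂μ, f t ∈ G t) ∧ y = ∫ t, f t ∂μ}) =
      ∫ t, sSup ((fun y => x y) '' G t) ∂μ := by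
  set σ := fun t => sSup ((fun y => x y) '' G t)
  set A := (fun y => x y) ''
    {y | ∃ f : α → E, Integrable f μ ∧ (∀ᵐ t ∂μ, f t ∈ G t) ∧ y = ∫ t, f t ∂μ}
  have hσ : Integrable σ μ := integrable_sSup_image x
    (hG.measurable_sSup_image x.continuous hne hbdd).aestronglyMeasurable (.of_forall hne) hk hkG
  have hsel : ∀ ε > 0, ∃ f : α → E, Integrable f μ ∧ (∀ t, f t ∈ G t) ∧
      ∀ t, σ t - ε ≤ x (f t) := fun ε hε => by
    obtain ⟨f, hf, hfG⟩ := hG.exists_stronglyMeasurable_sSup_sub_le hne hcl x.continuous hbdd hε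
    refine ⟨f, hk.mono' hf.aestronglyMeasurable ?_, fun t => (hfG t).1, fun t => (hfG t).2⟩
    filter_upwards [hkG] with t hkt using hkt _ (hfG t).1
  have hmem : ∀ f : α → E, Integrable f μ → (∀ t, f t ∈ G t) → x (∫ t, f t ∂μ) ∈ A :=
    fun f hf hfG => mem_image_of_mem _ ⟨f, hf, .of_forall hfG, rfl⟩
  have hupper : ∀ r ∈ A, r ≤ ∫ t, σ t ∂μ := by
    rintro _ ⟨_, ⟨f, hf, hfG, rfl⟩, rfl⟩
    exact apply_integral_le_integral_sSup_image x hf hfG (.of_forall hbdd) hσ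
  obtain ⟨f₁, hf₁, hf₁G, -⟩ := hsel 1 one_pos
  refine le_antisymm (csSup_le ⟨_, hmem f₁ hf₁ hf₁G⟩ hupper) (le_of_forall_sub_le fun ε hε => ?_)
  set m := μ.real univ
  have hm : 0 ≤ m := measureReal_nonneg
  obtain ⟨f, hf, hfG, hfσ⟩ := hsel (ε / (m + 1)) (by positivity)
  calc ∫ t, σ t ∂μ - ε ≤ ∫ t, σ t ∂μ - ε / (m + 1) * m := by
        gcongr
        rw [div_mul_eq_mul_div, div_le_iff₀ (by positivity)]
        nlinarith
    _ = ∫ t, (σ t - ε / (m + 1)) ∂μ := by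
        rw [integral_sub hσ (integrable_const _), integral_const, smul_eq_mul, mul_comm]
    _ ≤ ∫ t, x (f t) ∂μ := integral_mono (hσ.sub (integrable_const _)) (x.integrable_comp hf) hfσ
    _ = x (∫ t, f t ∂μ) := x.integral_comp_comm hf
    _ ≤ sSup A := le_csSup ⟨_, hupper⟩ (hmem f hf hfG)

end SupportFunction

theorem aumannIntegral_congr_ae {E : Type*} [NormedAddCommGroup E] [NormedSpace ℝ E]
    {X Y : ℝ → Set E} {s : Set ℝ} (h : ∀ᵐ τ ∂(volume.restrict s), X τ = Y τ) :
    aumannIntegral X s = aumannIntegral Y s := by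
  have hsel : ∀ f : ℝ → E, (∀ᵐ τ ∂(volume.restrict s), f τ ∈ X τ) ↔
      ∀ᵐ τ ∂(volume.restrict s), f τ ∈ Y τ := fun f =>
    eventually_congr (h.mono fun τ hτ => by rw [hτ])
  simp only [aumannIntegral, hsel]

theorem supportFunction_aumannIntegral_general
    {E : Type*} [NormedAddCommGroup E] [NormedSpace ℝ E] [CompleteSpace E]
    [TopologicalSpace.SeparableSpace E]
    (a b : ℝ) (G : ℝ → Set E)
    (hne : ∀ τ ∈ Set.Icc a b, (G τ).Nonempty)
    (hcl : ∀ τ ∈ Set.Icc a b, IsClosed (G τ))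
    (hbdd : ∀ τ ∈ Set.Icc a b, Bornology.IsBounded (G τ))
    (hmeas : ∀ O : Set E, IsOpen O → MeasurableSet {τ | τ ∈ Set.Icc a b ∧ (G τ ∩ O).Nonempty})
    (hbd : ∃ k : ℝ → ℝ, IntegrableOn k (Set.Icc a b) volume ∧
        ∀ᵐ τ ∂(volume.restrict (Set.Icc a b)), ∀ x ∈ G τ, ‖x‖ ≤ k τ)
    (x : StrongDual ℝ E) :
    sSup ((fun y => x y) '' aumannIntegral G (Set.Ioc a b)) =
      ∫ τ in Set.Ioc a b, sSup ((fun y => x y) '' G τ) := by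
  obtain ⟨k, hk, hkG⟩ := hbd
  -- Off `Icc a b` nothing is known about `G`; replacing it there by `{0}` changes neither side.
  set G' : ℝ → Set E := fun τ => if τ ∈ Icc a b then G τ else {0}
  have hG' : ∀ᵐ τ ∂(volume.restrict (Ioc a b)), G' τ = G τ :=
    (ae_restrict_mem measurableSet_Ioc).mono fun τ hτ => if_pos (Ioc_subset_Icc_self hτ)
  have hkG' : ∀ᵐ τ ∂(volume.restrict (Ioc a b)), ∀ y ∈ G' τ, ‖y‖ ≤ k τ := by
    filter_upwards [hG', ae_restrict_of_ae_restrict_of_subset Ioc_subset_Icc_self hkG]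
      with τ hτ hkτ
    rwa [hτ]
  rw [← aumannIntegral_congr_ae hG',
    ← integral_congr_ae (hG'.mono fun τ hτ => congrArg (fun S => sSup ((fun y => x y) '' S)) hτ)]
  refine sSup_image_integral_selections_eq x (isWeaklyMeasurable_ite measurableSet_Icc hmeas {0})
    (fun τ => ?_) (fun τ => ?_) (fun τ => ?_) (hk.mono_set Ioc_subset_Icc_self) hkG'
  all_goals by_cases hτ : τ ∈ Icc a b <;> simp only [G', hτ, if_true, if_false]
  · exact hne τ hτ
  · exact singleton_nonempty 0
  · exact hcl τ hτ
  · exact isClosed_singleton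
  · exact (x.lipschitz.isBounded_image (hbdd τ hτ)).bddAbove
  · simp

/-- The support function commutes with the Aumann integral: for a measurable integrably bounded
set-valued map `G` with nonempty closed bounded convex values in a separable reflexive Banach
space, `s(x*, ∫_a^b G dτ) = ∫_a^b s(x*, G(τ)) dτ` for every `x*` in the dual. -/
theorem supportFunction_aumannIntegral
    {E : Type*} [NormedAddCommGroup E] [NormedSpace ℝ E] [CompleteSpace E]
    [TopologicalSpace.SeparableSpace E]
    (hrefl : Function.Surjective (NormedSpace.inclusionInDoubleDual ℝ E))
    (a b : ℝ) (hab : a ≤ b) (G : ℝ → Set E)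
    (hne : ∀ τ ∈ Set.Icc a b, (G τ).Nonempty)
    (hcl : ∀ τ ∈ Set.Icc a b, IsClosed (G τ))
    (hco : ∀ τ ∈ Set.Icc a b, Convex ℝ (G τ))
    (hbdd : ∀ τ ∈ Set.Icc a b, Bornology.IsBounded (G τ))
    (hmeas : ∀ O : Set E, IsOpen O → MeasurableSet {τ | τ ∈ Set.Icc a b ∧ (G τ ∩ O).Nonempty})
    (hbd : ∃ k : ℝ → ℝ, IntegrableOn k (Set.Icc a b) volume ∧
        ∀ᵐ τ ∂(volume.restrict (Set.Icc a b)), ∀ x ∈ G τ, ‖x‖ ≤ k τ)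
    (x : StrongDual ℝ E) :
    sSup ((fun y => x y) '' aumannIntegral G (Set.Ioc a b)) =
      ∫ τ in Set.Ioc a b, sSup ((fun y => x y) '' G τ) :=
  supportFunction_aumannIntegral_general a b G hne hcl hbdd hmeas hbd x
end

section
/- Monotonicity of lower and upper sums under refinement: under the birth-and-growth assumptions, if Π′ is a refinement of the partition Π of [t₀, t], then s_Π ⊆ s_{Π′} and S_{Π′} ⊆ S_Π almost surely, where s_Π and S_Π are the lower and upper sums defined by s_Π = (B_{t₀} ⊕ ∫_{t₀}^t G dτ) ∪ ⋃_i (ΔB_{t_i} ⊕ ∫_{t_i}^t G dτ) and S_Π = (B_{t₀} ⊕ ∫_{t₀}^t G dτ) ∪ ⋃_i (ΔB_{t_i} ⊕ ∫_{t_{i-1}}^t G dτ). -/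
/-!
Both inclusions hold for every `ω`. Since `0 ∈ G`, extending a selection by zero shows that the
Aumann integral over `(a, tEnd]` only grows as `a` decreases. For the lower sums, a point of
`B (t i) \ interior (B (t (i - 1)))` lies in some `B (t' k) \ interior (B (t' (k - 1)))` with
`t (i - 1) < t' k ≤ t i`: take the first index of the finer partition at which it is no longer
interior to the previous set. For the upper sums, each `t' k` lies in some `(t (i - 1), t i]`,
and monotonicity of `B` puts the `k`-th term of the finer sum inside the `i`-th term of the
coarser one.
-/

open MeasureTheory Pointwise

/-- The predictable σ-algebra on `Ω × ℝ` associated to a filtration, over time horizon `[t₀,T]`. -/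
def predictableSigma {Ω : Type*} (𝓕 : ℝ → MeasurableSpace Ω) (t₀ T : ℝ) :
    MeasurableSpace (Ω × ℝ) :=
  MeasurableSpace.generateFrom
    {S | (∃ A : Set Ω, MeasurableSet[𝓕 t₀] A ∧ S = A ×ˢ ({t₀} : Set ℝ)) ∨
      (∃ A : Set Ω, ∃ s u : ℝ, t₀ ≤ s ∧ s < u ∧ u ≤ T ∧ MeasurableSet[𝓕 s] A ∧
        S = A ×ˢ Set.Ioc s u)}

/-- `t : ℕ → ℝ` (up to index `n`) is a partition of `[t₀, tEnd]`. -/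
def IsPartition (t₀ tEnd : ℝ) (n : ℕ) (t : ℕ → ℝ) : Prop :=
  t 0 = t₀ ∧ t n = tEnd ∧ ∀ i < n, t i < t (i + 1)

/-- The lower sum `s_Π(tEnd)` of the birth-and-growth process, for trajectories `B`, `G`. -/
noncomputable def lowerSum {E : Type*} [NormedAddCommGroup E] [NormedSpace ℝ E]
    (B G : ℝ → Set E) (tEnd : ℝ) (n : ℕ) (t : ℕ → ℝ) : Set E :=
  closure (B (t 0) + aumannIntegral G (Set.Ioc (t 0) tEnd)) ∪
    ⋃ i ∈ Finset.Icc 1 n,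
      closure ((B (t i) \ interior (B (t (i - 1)))) + aumannIntegral G (Set.Ioc (t i) tEnd))

/-- The upper sum `S_Π(tEnd)` of the birth-and-growth process, for trajectories `B`, `G`. -/
noncomputable def upperSum {E : Type*} [NormedAddCommGroup E] [NormedSpace ℝ E]
    (B G : ℝ → Set E) (tEnd : ℝ) (n : ℕ) (t : ℕ → ℝ) : Set E :=
  closure (B (t 0) + aumannIntegral G (Set.Ioc (t 0) tEnd)) ∪
    ⋃ i ∈ Finset.Icc 1 n,
      closure ((B (t i) \ interior (B (t (i - 1)))) + aumannIntegral G (Set.Ioc (t (i - 1)) tEnd))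

lemma aumannIntegral_mono_set {E : Type*} [NormedAddCommGroup E] [NormedSpace ℝ E]
    {G : ℝ → Set E} (hG0 : ∀ u, (0 : E) ∈ G u) {s s' : Set ℝ} (hs : MeasurableSet s)
    (hss' : s ⊆ s') : aumannIntegral G s ⊆ aumannIntegral G s' := by
  rintro _ ⟨f, hf, hfG, rfl⟩
  refine ⟨s.indicator f, (hf.integrable_indicator hs).integrableOn, ?_, ?_⟩
  · refine ae_restrict_of_ae (((ae_restrict_iff' hs).mp hfG).mono fun τ hτ => ?_)
    by_cases hτs : τ ∈ s
    · simpa only [Set.indicator_of_mem hτs] using hτ hτs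
    · simpa only [Set.indicator_of_notMem hτs] using hG0 τ
  · rw [setIntegral_indicator hs, Set.inter_eq_self_of_subset_right hss']

lemma exists_mem_diff_interior_pred {X : Type*} [TopologicalSpace X] (C : ℕ → Set X) {x : X}
    {a b : ℕ} (hab : a < b) (hb : x ∈ C b) (ha : x ∉ interior (C a)) :
    ∃ k, a < k ∧ k ≤ b ∧ x ∈ C k \ interior (C (k - 1)) := by
  induction b, hab using Nat.le_induction with
  | base => exact ⟨a + 1, by omega, le_rfl, hb, by simpa using ha⟩
  | succ b _ ih =>
    by_cases hxb : x ∈ interior (C b)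
    · obtain ⟨k, hak, hkb, hk⟩ := ih (interior_subset hxb)
      exact ⟨k, hak, hkb.trans b.le_succ, hk⟩
    · exact ⟨b + 1, by omega, le_rfl, hb, by simpa using hxb⟩

lemma exists_mem_Ioc_pred {α : Type*} [LinearOrder α] {t : ℕ → α} {c : α} {n : ℕ}
    (h0 : t 0 < c) (hn : c ≤ t n) : ∃ i, 1 ≤ i ∧ i ≤ n ∧ c ∈ Set.Ioc (t (i - 1)) (t i) := by
  classical
  have hex : ∃ i, c ≤ t i := ⟨n, hn⟩
  have hpos : Nat.find hex ≠ 0 := fun h => (h ▸ Nat.find_spec hex).not_gt h0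
  exact ⟨Nat.find hex, by omega, Nat.find_min' hex hn,
    not_le.mp (Nat.find_min hex (by omega)), Nat.find_spec hex⟩

lemma IsPartition.strictMonoOn {t₀ tEnd : ℝ} {n : ℕ} {t : ℕ → ℝ}
    (h : IsPartition t₀ tEnd n t) : StrictMonoOn t (Set.Iic n) :=
  strictMonoOn_Iic_of_lt_succ h.2.2

section Refinement

variable {E : Type*} [NormedAddCommGroup E] [NormedSpace ℝ E] {B G : ℝ → Set E}
  {t₀ tEnd : ℝ} {n m : ℕ} {t t' : ℕ → ℝ}

lemma lowerSum_subset_of_refines (hG0 : ∀ u, (0 : E) ∈ G u)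
    (hpart : IsPartition t₀ tEnd n t) (hpart' : IsPartition t₀ tEnd m t')
    (hrefine : ∀ i ≤ n, ∃ j ≤ m, t' j = t i) :
    lowerSum B G tEnd n t ⊆ lowerSum B G tEnd m t' := by
  have ht0 : t 0 = t' 0 := hpart.1.trans hpart'.1.symm
  refine Set.union_subset (ht0 ▸ Set.subset_union_left) (Set.iUnion₂_subset fun i hi => ?_)
  rw [Finset.mem_Icc] at hi
  refine Set.subset_union_of_subset_right ?_ _
  rw [← Finset.closure_biUnion]
  refine closure_mono ?_
  rintro _ ⟨x, hx, g, hg, rfl⟩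
  obtain ⟨j, hjm, hj⟩ := hrefine i hi.2
  obtain ⟨j', hj'm, hj'⟩ := hrefine (i - 1) (by omega)
  have hj'j : j' < j := by
    refine (hpart'.strictMonoOn.lt_iff_lt hj'm hjm).mp ?_
    rw [hj, hj']
    exact hpart.strictMonoOn (show i - 1 ≤ n by omega) hi.2 (by omega)
  obtain ⟨k, hj'k, hkj, hxk⟩ :=
    exists_mem_diff_interior_pred (fun l => B (t' l)) hj'j (hj ▸ hx.1) (hj' ▸ hx.2)
  have hki : t' k ≤ t i := hj ▸ hpart'.strictMonoOn.monotoneOn (hkj.trans hjm) hjm hkj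
  exact Set.mem_biUnion (Finset.mem_Icc.mpr ⟨by omega, hkj.trans hjm⟩) <| Set.add_mem_add hxk <|
    aumannIntegral_mono_set hG0 measurableSet_Ioc (Set.Ioc_subset_Ioc_left hki) hg

lemma upperSum_subset_of_refines (hB : Monotone B) (hG0 : ∀ u, (0 : E) ∈ G u)
    (hpart : IsPartition t₀ tEnd n t) (hpart' : IsPartition t₀ tEnd m t')
    (hrefine : ∀ i ≤ n, ∃ j ≤ m, t' j = t i) :
    upperSum B G tEnd m t' ⊆ upperSum B G tEnd n t := by
  have ht0 : t' 0 = t 0 := hpart'.1.trans hpart.1.symm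
  refine Set.union_subset (ht0 ▸ Set.subset_union_left) (Set.iUnion₂_subset fun k hk => ?_)
  rw [Finset.mem_Icc] at hk
  have hmono' := hpart'.strictMonoOn
  obtain ⟨i, hi1, hin, hlt, hle⟩ : ∃ i, 1 ≤ i ∧ i ≤ n ∧ t' k ∈ Set.Ioc (t (i - 1)) (t i) := by
    refine exists_mem_Ioc_pred ?_ ?_
    · rw [← ht0]; exact hmono' (Nat.zero_le m) hk.2 (by omega)
    · rw [hpart.2.1, ← hpart'.2.1]; exact hmono'.monotoneOn hk.2 (le_refl m) hk.2
  obtain ⟨j', hj'm, hj'⟩ := hrefine (i - 1) (by omega)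
  have hj'k : j' < k := (hmono'.lt_iff_lt hj'm hk.2).mp (hj' ▸ hlt)
  have hprev : t (i - 1) ≤ t' (k - 1) :=
    hj' ▸ hmono'.monotoneOn hj'm (show k - 1 ≤ m by omega) (by omega)
  refine Set.subset_union_of_subset_right
    (Set.subset_iUnion₂_of_subset i (Finset.mem_Icc.mpr ⟨hi1, hin⟩) (closure_mono ?_)) _
  exact Set.add_subset_add (Set.sdiff_subset_sdiff (hB hle) (interior_mono (hB hprev)))
    (aumannIntegral_mono_set hG0 measurableSet_Ioc (Set.Ioc_subset_Ioc_left hprev))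

end Refinement

theorem lowerSum_upperSum_refinement_general
    {Ω : Type*} [mΩ : MeasurableSpace Ω]
    {E : Type*} [NormedAddCommGroup E] [NormedSpace ℝ E]
    (t₀ : ℝ)
    (P : Measure Ω)
    (B G : Ω → ℝ → Set E)
    (hBmono : ∀ ω, ∀ s u : ℝ, s ≤ u → B ω s ⊆ B ω u)
    (hG0 : ∀ ω u, (0 : E) ∈ G ω u)
    (tEnd : ℝ)
    (n : ℕ) (t : ℕ → ℝ) (hpart : IsPartition t₀ tEnd n t)
    (m : ℕ) (t' : ℕ → ℝ) (hpart' : IsPartition t₀ tEnd m t')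
    (hrefine : ∀ i ≤ n, ∃ j ≤ m, t' j = t i) :
    ∀ᵐ ω ∂P,
      lowerSum (B ω) (G ω) tEnd n t ⊆ lowerSum (B ω) (G ω) tEnd m t' ∧
      upperSum (B ω) (G ω) tEnd m t' ⊆ upperSum (B ω) (G ω) tEnd n t :=
  ae_of_all P fun ω =>
    ⟨lowerSum_subset_of_refines (hG0 ω) hpart hpart' hrefine,
      upperSum_subset_of_refines (hBmono ω) (hG0 ω) hpart hpart' hrefine⟩

/-- Monotonicity of lower and upper sums under refinement of the partition. -/
theorem lowerSum_upperSum_refinement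
    {Ω : Type*} [mΩ : MeasurableSpace Ω]
    {E : Type*} [NormedAddCommGroup E] [NormedSpace ℝ E] [CompleteSpace E]
    [TopologicalSpace.SeparableSpace (StrongDual ℝ E)]
    (hrefl : Function.Surjective (NormedSpace.inclusionInDoubleDual ℝ E))
    (t₀ T : ℝ) (hT : t₀ ≤ T)
    (P : Measure Ω) [IsProbabilityMeasure P]
    (𝓕 : ℝ → MeasurableSpace Ω) (h𝓕mono : Monotone 𝓕) (h𝓕le : ∀ u, 𝓕 u ≤ mΩ)
    (B G : Ω → ℝ → Set E) (K : Set E) (hK : Bornology.IsBounded K)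
    (hBvals : ∀ ω u, (B ω u).Nonempty ∧ IsClosed (B ω u))
    (hBmono : ∀ ω, ∀ s u : ℝ, s ≤ u → B ω s ⊆ B ω u)
    (hBadapted : ∀ u : ℝ, ∀ O : Set E, IsOpen O →
      MeasurableSet[𝓕 u] {ω | (B ω u ∩ O).Nonempty})
    (hGvals : ∀ ω u, (G ω u).Nonempty ∧ IsClosed (G ω u) ∧ Convex ℝ (G ω u))
    (hG0 : ∀ ω u, (0 : E) ∈ G ω u) (hGsub : ∀ ω u, G ω u ⊆ K)
    (hGpred : ∀ O : Set E, IsOpen O →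
      MeasurableSet[predictableSigma 𝓕 t₀ T] {p : Ω × ℝ | (G p.1 p.2 ∩ O).Nonempty})
    (tEnd : ℝ) (htEnd : tEnd ∈ Set.Icc t₀ T)
    (n : ℕ) (t : ℕ → ℝ) (hpart : IsPartition t₀ tEnd n t)
    (m : ℕ) (t' : ℕ → ℝ) (hpart' : IsPartition t₀ tEnd m t')
    (hrefine : ∀ i ≤ n, ∃ j ≤ m, t' j = t i) :
    ∀ᵐ ω ∂P,
      lowerSum (B ω) (G ω) tEnd n t ⊆ lowerSum (B ω) (G ω) tEnd m t' ∧
      upperSum (B ω) (G ω) tEnd m t' ⊆ upperSum (B ω) (G ω) tEnd n t :=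
  lowerSum_upperSum_refinement_general (mΩ := mΩ) t₀ P B G hBmono hG0 tEnd n t hpart m t' hpart'
    hrefine
end

section
/- Hausdorff distance between lower and upper sums tends to zero: under the birth-and-growth assumptions, if (Π_j) is a sequence of partitions of [t₀, t] with mesh |Π_j| → 0, then d_H(s_{Π_j}, S_{Π_j}) → 0 almost surely; more precisely, d_H(s_{Π_j}, S_{Π_j}) ≤ |Π_j|(‖K‖_h + 1), where ‖K‖_h = sup_{k∈K}‖k‖. -/
/-!
The bound holds pathwise. Since `0 ∈ G`, the Aumann integral is monotone in the time set, so
`s_Π ⊆ S_Π`. The `i`-th piece of `S_Π` differs from that of `s_Π` only in integrating `G` also over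
`(t_{i-1}, t_i]`; dropping that part of a selection of `G` moves a point by at most
`‖K‖_h (t_i - t_{i-1}) ≤ ‖K‖_h |Π|`.
-/

open MeasureTheory Pointwise

/-- The mesh of a partition. -/
noncomputable def partitionMesh (n : ℕ) (t : ℕ → ℝ) (hn : 1 ≤ n) : ℝ :=
  (Finset.range n).sup' (by simp [Finset.nonempty_range_iff]; omega) (fun i => t (i + 1) - t i)

open Metric Set

theorem IsPartition.monotoneOn {t₀ tEnd : ℝ} {n : ℕ} {t : ℕ → ℝ}
    (h : IsPartition t₀ tEnd n t) : MonotoneOn t (Iic n) :=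
  (strictMonoOn_Iic_of_lt_succ fun m hm => by simpa using h.2.2 m hm).monotoneOn

theorem le_partitionMesh {n : ℕ} {t : ℕ → ℝ} (hn : 1 ≤ n) {i : ℕ} (hi : i < n) :
    t (i + 1) - t i ≤ partitionMesh n t hn :=
  Finset.le_sup' (fun i => t (i + 1) - t i) (Finset.mem_range.mpr hi)

theorem partitionMesh_nonneg {t₀ tEnd : ℝ} {n : ℕ} {t : ℕ → ℝ} (hn : 1 ≤ n)
    (h : IsPartition t₀ tEnd n t) : 0 ≤ partitionMesh n t hn := by
  linarith [le_partitionMesh (t := t) hn hn, h.2.2 0 hn]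

theorem norm_le_sSup_image_norm {E : Type*} [SeminormedAddCommGroup E] {K : Set E}
    (hK : Bornology.IsBounded K) {x : E} (hx : x ∈ K) : ‖x‖ ≤ sSup ((‖·‖) '' K) := by
  obtain ⟨C, hC⟩ := isBounded_iff_forall_norm_le.mp hK
  exact le_csSup ⟨C, forall_mem_image.mpr hC⟩ (mem_image_of_mem _ hx)

theorem hausdorffDist_le_of_subset_of_infDist_le {α : Type*} [PseudoMetricSpace α]
    {s t : Set α} {r : ℝ} (hr : 0 ≤ r) (hst : s ⊆ t) (h : ∀ x ∈ t, infDist x s ≤ r) :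
    hausdorffDist s t ≤ r :=
  hausdorffDist_le_of_infDist hr (fun _ hx => (infDist_zero_of_mem (hst hx)).trans_le hr) h

section AumannIntegral

variable {E : Type*} [NormedAddCommGroup E] [NormedSpace ℝ E] {G : ℝ → Set E}

theorem aumannIntegral_mono (hG0 : ∀ u, (0 : E) ∈ G u) {s u : Set ℝ}
    (hs : MeasurableSet s) (hu : MeasurableSet u) (hsu : s ⊆ u) :
    aumannIntegral G s ⊆ aumannIntegral G u := by
  rintro y ⟨f, hfi, hfG, rfl⟩
  refine ⟨s.indicator f, ((integrable_indicator_iff hs).mpr hfi).integrableOn, ?_, ?_⟩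
  · rw [← union_sdiff_cancel hsu, Measure.restrict_union disjoint_sdiff_self_right (hu.diff hs),
      ae_add_measure_iff]
    constructor
    · filter_upwards [hfG, ae_restrict_mem hs] with τ hτG hτs
      rwa [indicator_of_mem hτs]
    · filter_upwards [ae_restrict_mem (hu.diff hs)] with τ hτ
      rw [indicator_of_notMem hτ.2]
      exact hG0 τ
  · rw [setIntegral_indicator hs, inter_eq_self_of_subset_right hsu]

theorem exists_dist_le_of_mem_aumannIntegral_Ioc {M : ℝ} (hGM : ∀ u, ∀ x ∈ G u, ‖x‖ ≤ M)
    {a c e : ℝ} (hac : a ≤ c) (hce : c ≤ e) {y : E} (hy : y ∈ aumannIntegral G (Ioc a e)) :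
    ∃ z ∈ aumannIntegral G (Ioc c e), dist y z ≤ M * (c - a) := by
  obtain ⟨f, hfi, hfG, rfl⟩ := hy
  have hce_sub : Ioc c e ⊆ Ioc a e := Ioc_subset_Ioc_left hac
  have hac_sub : Ioc a c ⊆ Ioc a e := Ioc_subset_Ioc_right hce
  refine ⟨∫ τ in Ioc c e, f τ,
    ⟨f, hfi.mono_set hce_sub, ae_restrict_of_ae_restrict_of_subset hce_sub hfG, rfl⟩, ?_⟩
  have hsplit : ∫ τ in Ioc a e, f τ = (∫ τ in Ioc a c, f τ) + ∫ τ in Ioc c e, f τ := by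
    rw [← setIntegral_union (Ioc_disjoint_Ioc_of_le le_rfl) measurableSet_Ioc
      (hfi.mono_set hac_sub) (hfi.mono_set hce_sub), Ioc_union_Ioc_eq_Ioc hac hce]
  have hbound : ∀ᵐ τ ∂volume.restrict (Ioc a c), ‖f τ‖ ≤ M := by
    filter_upwards [ae_restrict_of_ae_restrict_of_subset hac_sub hfG] with τ hτ
    exact hGM τ _ hτ
  calc dist (∫ τ in Ioc a e, f τ) (∫ τ in Ioc c e, f τ) = ‖∫ τ in Ioc a c, f τ‖ := by
        rw [hsplit, dist_eq_norm, add_sub_cancel_right]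
    _ ≤ M * volume.real (Ioc a c) :=
        norm_setIntegral_le_of_norm_le_const_ae (by simp [Real.volume_Ioc]) hbound
    _ = M * (c - a) := by rw [Real.volume_real_Ioc_of_le hac]

end AumannIntegral

section BirthAndGrowth

variable {E : Type*} [NormedAddCommGroup E] [NormedSpace ℝ E] {B G : ℝ → Set E}
  {t₀ tEnd : ℝ} {n : ℕ} {t : ℕ → ℝ}

theorem lowerSum_subset_upperSum (hG0 : ∀ u, (0 : E) ∈ G u)
    (hpart : IsPartition t₀ tEnd n t) : lowerSum B G tEnd n t ⊆ upperSum B G tEnd n t := by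
  refine union_subset_union_right _ (iUnion₂_mono fun i hi => closure_mono ?_)
  have hin : i ≤ n := (Finset.mem_Icc.mp hi).2
  refine add_subset_add_left (aumannIntegral_mono hG0 measurableSet_Ioc measurableSet_Ioc
    (Ioc_subset_Ioc_left ?_))
  exact hpart.monotoneOn (mem_Iic.mpr (by omega)) (mem_Iic.mpr hin) (Nat.sub_le i 1)

theorem infDist_lowerSum_le_of_mem_upperSum_piece {M : ℝ} (hGM : ∀ u, ∀ x ∈ G u, ‖x‖ ≤ M)
    (hpart : IsPartition t₀ tEnd n t) {k : ℕ} (hk : k < n) {x : E}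
    (hx : x ∈ closure ((B (t (k + 1)) \ interior (B (t k))) +
      aumannIntegral G (Ioc (t k) tEnd))) :
    infDist x (lowerSum B G tEnd n t) ≤ M * (t (k + 1) - t k) := by
  refine closure_minimal (fun y hy => ?_)
    (isClosed_le (continuous_infDist_pt _) continuous_const) hx
  obtain ⟨b, hb, z, hz, rfl⟩ := hy
  have htk : t (k + 1) ≤ tEnd :=
    hpart.2.1 ▸ hpart.monotoneOn (mem_Iic.mpr hk) (mem_Iic.mpr le_rfl) hk
  obtain ⟨z', hz', hzz'⟩ :=
    exists_dist_le_of_mem_aumannIntegral_Ioc hGM (hpart.2.2 k hk).le htk hz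
  have hmem : b + z' ∈ lowerSum B G tEnd n t :=
    Or.inr (mem_biUnion (Finset.mem_Icc.mpr ⟨by omega, hk⟩)
      (subset_closure (add_mem_add hb (by simpa using hz'))))
  calc infDist (b + z) (lowerSum B G tEnd n t) ≤ dist (b + z) (b + z') :=
        infDist_le_dist_of_mem hmem
    _ ≤ M * (t (k + 1) - t k) := by rwa [dist_add_left]

theorem hausdorffDist_lowerSum_upperSum_le {M : ℝ} (hG0 : ∀ u, (0 : E) ∈ G u)
    (hGM : ∀ u, ∀ x ∈ G u, ‖x‖ ≤ M) (hn : 1 ≤ n) (hpart : IsPartition t₀ tEnd n t) :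
    hausdorffDist (lowerSum B G tEnd n t) (upperSum B G tEnd n t) ≤ partitionMesh n t hn * M := by
  have hM : 0 ≤ M := by simpa using hGM 0 0 (hG0 0)
  have hr : 0 ≤ partitionMesh n t hn * M := mul_nonneg (partitionMesh_nonneg hn hpart) hM
  refine hausdorffDist_le_of_subset_of_infDist_le hr (lowerSum_subset_upperSum hG0 hpart) ?_
  rintro x (hx | hx)
  · exact (infDist_zero_of_mem (s := lowerSum B G tEnd n t) (Or.inl hx)).trans_le hr
  · obtain ⟨i, hi, hxi⟩ := mem_iUnion₂.mp hx
    obtain ⟨k, rfl⟩ : ∃ k, i = k + 1 := ⟨i - 1, by have := (Finset.mem_Icc.mp hi).1; omega⟩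
    have hk : k < n := by have := (Finset.mem_Icc.mp hi).2; omega
    calc infDist x (lowerSum B G tEnd n t) ≤ M * (t (k + 1) - t k) :=
          infDist_lowerSum_le_of_mem_upperSum_piece hGM hpart hk (by simpa using hxi)
      _ ≤ partitionMesh n t hn * M := by
          rw [mul_comm]; exact mul_le_mul_of_nonneg_right (le_partitionMesh hn hk) hM

end BirthAndGrowth

theorem hausdorffDist_lowerSum_upperSum_tendsto_zero_general
    {Ω : Type*} [mΩ : MeasurableSpace Ω]
    {E : Type*} [NormedAddCommGroup E] [NormedSpace ℝ E]
    (t₀ : ℝ)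
    (P : Measure Ω)
    (B G : Ω → ℝ → Set E) (K : Set E) (hK : Bornology.IsBounded K)
    (hG0 : ∀ ω u, (0 : E) ∈ G ω u) (hGsub : ∀ ω u, G ω u ⊆ K)
    (tEnd : ℝ)
    (N : ℕ → ℕ) (hN : ∀ j, 1 ≤ N j) (t : ℕ → ℕ → ℝ)
    (hpart : ∀ j, IsPartition t₀ tEnd (N j) (t j))
    (hmesh : Filter.Tendsto (fun j => partitionMesh (N j) (t j) (hN j))
      Filter.atTop (nhds 0)) :
    ∀ᵐ ω ∂P,
      (∀ j, Metric.hausdorffDist (lowerSum (B ω) (G ω) tEnd (N j) (t j))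
          (upperSum (B ω) (G ω) tEnd (N j) (t j)) ≤
        partitionMesh (N j) (t j) (hN j) * (sSup ((fun k => ‖k‖) '' K) + 1)) ∧
      Filter.Tendsto (fun j => Metric.hausdorffDist (lowerSum (B ω) (G ω) tEnd (N j) (t j))
          (upperSum (B ω) (G ω) tEnd (N j) (t j))) Filter.atTop (nhds 0) := by
  refine ae_of_all _ fun ω => ?_
  set M := sSup ((fun k => ‖k‖) '' K)
  have hGM : ∀ u, ∀ x ∈ G ω u, ‖x‖ ≤ M := fun u x hx => norm_le_sSup_image_norm hK (hGsub ω u hx)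
  have hbound : ∀ j, hausdorffDist (lowerSum (B ω) (G ω) tEnd (N j) (t j))
      (upperSum (B ω) (G ω) tEnd (N j) (t j)) ≤ partitionMesh (N j) (t j) (hN j) * (M + 1) :=
    fun j => (hausdorffDist_lowerSum_upperSum_le (hG0 ω) hGM (hN j) (hpart j)).trans
      (mul_le_mul_of_nonneg_left (lt_add_one M).le
        (partitionMesh_nonneg (hN j) (hpart j)))
  refine ⟨hbound, squeeze_zero (fun _ => hausdorffDist_nonneg) hbound ?_⟩
  simpa using hmesh.mul_const (M + 1)

/-- The Hausdorff distance between lower and upper sums is bounded by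
`|Π|(‖K‖_h + 1)` and tends to `0` along any sequence of partitions with mesh tending to `0`. -/
theorem hausdorffDist_lowerSum_upperSum_tendsto_zero
    {Ω : Type*} [mΩ : MeasurableSpace Ω]
    {E : Type*} [NormedAddCommGroup E] [NormedSpace ℝ E] [CompleteSpace E]
    [TopologicalSpace.SeparableSpace (StrongDual ℝ E)]
    (hrefl : Function.Surjective (NormedSpace.inclusionInDoubleDual ℝ E))
    (t₀ T : ℝ) (hT : t₀ ≤ T)
    (P : Measure Ω) [IsProbabilityMeasure P]
    (𝓕 : ℝ → MeasurableSpace Ω) (h𝓕mono : Monotone 𝓕) (h𝓕le : ∀ u, 𝓕 u ≤ mΩ)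
    (B G : Ω → ℝ → Set E) (K : Set E) (hK : Bornology.IsBounded K)
    (hBvals : ∀ ω u, (B ω u).Nonempty ∧ IsClosed (B ω u))
    (hBmono : ∀ ω, ∀ s u : ℝ, s ≤ u → B ω s ⊆ B ω u)
    (hBadapted : ∀ u : ℝ, ∀ O : Set E, IsOpen O →
      MeasurableSet[𝓕 u] {ω | (B ω u ∩ O).Nonempty})
    (hGvals : ∀ ω u, (G ω u).Nonempty ∧ IsClosed (G ω u) ∧ Convex ℝ (G ω u))
    (hG0 : ∀ ω u, (0 : E) ∈ G ω u) (hGsub : ∀ ω u, G ω u ⊆ K)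
    (hGpred : ∀ O : Set E, IsOpen O →
      MeasurableSet[predictableSigma 𝓕 t₀ T] {p : Ω × ℝ | (G p.1 p.2 ∩ O).Nonempty})
    (tEnd : ℝ) (htEnd : tEnd ∈ Set.Icc t₀ T)
    (N : ℕ → ℕ) (hN : ∀ j, 1 ≤ N j) (t : ℕ → ℕ → ℝ)
    (hpart : ∀ j, IsPartition t₀ tEnd (N j) (t j))
    (hmesh : Filter.Tendsto (fun j => partitionMesh (N j) (t j) (hN j))
      Filter.atTop (nhds 0)) :
    ∀ᵐ ω ∂P,
      (∀ j, Metric.hausdorffDist (lowerSum (B ω) (G ω) tEnd (N j) (t j))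
          (upperSum (B ω) (G ω) tEnd (N j) (t j)) ≤
        partitionMesh (N j) (t j) (hN j) * (sSup ((fun k => ‖k‖) '' K) + 1)) ∧
      Filter.Tendsto (fun j => Metric.hausdorffDist (lowerSum (B ω) (G ω) tEnd (N j) (t j))
          (upperSum (B ω) (G ω) tEnd (N j) (t j))) Filter.atTop (nhds 0) :=
  hausdorffDist_lowerSum_upperSum_tendsto_zero_general (mΩ := mΩ) t₀ P B G K hK hG0 hGsub tEnd N hN
    t hpart hmesh
end
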